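/- arXiv:2409.01843 — 2 statements merged into one kernel-verified Lean document; each statement's English description precedes it below -/
import Mathlib

section
/- Let V : [0,n] → ℝ be differentiable and satisfy Thiele's differential equation dV/dt = δ(t)·V(t) + P(t) − μ(t)·(S(t) − V(t)) with V(0) = 0 and V(n) = M, and let V* : [0,n] → ℝ be differentiable and satisfy dV*/dt = δ(t)·V*(t) + P*(t) − μ(t)·(S(t) − V*(t)) − ν(t)·(C(t) − V*(t)) with V*(0) = 0 and V*(n) = M. Define the discount factor φ(t) = exp(−∫₀ᵗ (δ(r) + μ(r) + ν'(r)) dr), where ν' is the experienced lapse rate. Then ∫₀ⁿ φ(t)·(P(t) − P*(t)) dt = ∫₀ⁿ φ(t)·ν'(t)·(V(t) − V*(t)) dt + ∫₀ⁿ φ(t)·ν(t)·(V*(t) − C(t)) dt. -/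
open Set intervalIntegral MeasureTheory

/-
The difference `w = V - V*` of the two policy values solves the linear equation
`w' = (δ + μ + ν') w + (P - P*) - ν' (V - V*) - ν (V* - C)`, in which `ν' w` has been added and
subtracted so that the experience-basis force `δ + μ + ν'` appears. Its integrating factor is
exactly `φ`, so the integrand on the left minus the right-hand integrands is `(φ w)'`, whose
integral `φ(n) w(n) - w(0)` vanishes because both policy values share their boundary values.
-/

theorem hasDerivAt_integral_of_continuousOn_Icc {f : ℝ → ℝ} {a b t : ℝ}
    (hf : ContinuousOn f (Icc a b)) (ht : t ∈ Ioo a b) :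
    HasDerivAt (fun s => ∫ r in a..s, f r) (f t) t := by
  have hnhds : Icc a b ∈ nhds t := Icc_mem_nhds ht.1 ht.2
  refine integral_hasDerivAt_right ?_ ⟨Icc a b, hnhds, hf.aestronglyMeasurable measurableSet_Icc⟩
    (hf.continuousAt hnhds)
  exact (hf.mono (Icc_subset_Icc le_rfl ht.2.le)).intervalIntegrable_of_Icc ht.1.le

theorem continuousOn_integral_of_continuousOn_Icc {f : ℝ → ℝ} {a b : ℝ} (hab : a ≤ b)
    (hf : ContinuousOn f (Icc a b)) :
    ContinuousOn (fun s => ∫ r in a..s, f r) (Icc a b) := by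
  have hint : IntegrableOn f (uIcc a b) volume := by
    rw [uIcc_of_le hab]
    exact hf.integrableOn_Icc
  simpa only [uIcc_of_le hab] using continuousOn_primitive_interval hint

theorem integral_exp_neg_integral_mul_eq_of_hasDerivAt {f h w : ℝ → ℝ} {a b : ℝ} (hab : a ≤ b)
    (hf : ContinuousOn f (Icc a b)) (hh : ContinuousOn h (Icc a b))
    (hw : ContinuousOn w (Icc a b))
    (hw' : ∀ t ∈ Ioo a b, HasDerivAt w (f t * w t + h t) t) :
    ∫ t in a..b, Real.exp (-∫ r in a..t, f r) * h t
      = Real.exp (-∫ r in a..b, f r) * w b - w a := by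
  set F : ℝ → ℝ := fun s => ∫ r in a..s, f r
  have hFc : ContinuousOn (fun t => Real.exp (-F t)) (Icc a b) :=
    Real.continuous_exp.comp_continuousOn (continuousOn_integral_of_continuousOn_Icc hab hf).neg
  have hderiv : ∀ t ∈ Ioo a b,
      HasDerivAt (fun t => Real.exp (-F t) * w t) (Real.exp (-F t) * h t) t := fun t ht =>
    (((hasDerivAt_integral_of_continuousOn_Icc hf ht).neg.exp).mul (hw' t ht)).congr_deriv
      (by simp only [Pi.neg_apply, F]; ring)
  rw [integral_eq_sub_of_hasDerivAt_of_le hab (hFc.mul hw) hderiv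
    ((hFc.mul hh).intervalIntegrable_of_Icc hab)]
  simp [F]

theorem stmt_0_general (n M : ℝ) (hn : 0 < n)
    (δ μ ν ν' P Pstar S C V Vstar φ : ℝ → ℝ)
    (hδ : ContinuousOn δ (Icc 0 n)) (hμ : ContinuousOn μ (Icc 0 n))
    (hν : ContinuousOn ν (Icc 0 n)) (hν' : ContinuousOn ν' (Icc 0 n))
    (hP : ContinuousOn P (Icc 0 n)) (hPstar : ContinuousOn Pstar (Icc 0 n))
    (hC : ContinuousOn C (Icc 0 n))
    (hV : ∀ t ∈ Icc (0:ℝ) n,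
      HasDerivAt V (δ t * V t + P t - μ t * (S t - V t)) t)
    (hV0 : V 0 = 0) (hVn : V n = M)
    (hVstar : ∀ t ∈ Icc (0:ℝ) n,
      HasDerivAt Vstar
        (δ t * Vstar t + Pstar t - μ t * (S t - Vstar t) - ν t * (C t - Vstar t)) t)
    (hVstar0 : Vstar 0 = 0) (hVstarn : Vstar n = M)
    (hφ : ∀ t, φ t = Real.exp (-∫ r in (0:ℝ)..t, (δ r + μ r + ν' r))) :
    ∫ t in (0:ℝ)..n, φ t * (P t - Pstar t)
      = (∫ t in (0:ℝ)..n, φ t * ν' t * (V t - Vstar t))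
        + ∫ t in (0:ℝ)..n, φ t * ν t * (Vstar t - C t) := by
  have hVc : ContinuousOn V (Icc 0 n) := fun t ht => (hV t ht).continuousAt.continuousWithinAt
  have hVstarc : ContinuousOn Vstar (Icc 0 n) := fun t ht =>
    (hVstar t ht).continuousAt.continuousWithinAt
  have hφc : ContinuousOn φ (Icc 0 n) := by
    rw [show φ = _ from funext hφ]
    exact Real.continuous_exp.comp_continuousOn
      (continuousOn_integral_of_continuousOn_Icc hn.le ((hδ.add hμ).add hν')).neg
  have hfund := integral_exp_neg_integral_mul_eq_of_hasDerivAt (f := fun r => δ r + μ r + ν' r)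
    (h := fun t => (P t - Pstar t) - ν' t * (V t - Vstar t) - ν t * (Vstar t - C t))
    (w := fun t => V t - Vstar t) hn.le ((hδ.add hμ).add hν')
    (((hP.sub hPstar).sub (hν'.mul (hVc.sub hVstarc))).sub (hν.mul (hVstarc.sub hC)))
    (hVc.sub hVstarc) fun t ht =>
      ((hV t (Ioo_subset_Icc_self ht)).sub (hVstar t (Ioo_subset_Icc_self ht))).congr_deriv
        (by ring)
  simp only [← hφ, hV0, hVn, hVstar0, hVstarn, sub_self, mul_zero] at hfund
  have hIA : IntervalIntegrable (fun t => φ t * (P t - Pstar t)) volume 0 n :=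
    (hφc.mul (hP.sub hPstar)).intervalIntegrable_of_Icc hn.le
  have hIB : IntervalIntegrable (fun t => φ t * ν' t * (V t - Vstar t)) volume 0 n :=
    ((hφc.mul hν').mul (hVc.sub hVstarc)).intervalIntegrable_of_Icc hn.le
  have hIC : IntervalIntegrable (fun t => φ t * ν t * (Vstar t - C t)) volume 0 n :=
    ((hφc.mul hν).mul (hVstarc.sub hC)).intervalIntegrable_of_Icc hn.le
  rw [← integral_add hIB hIC, ← sub_eq_zero, ← integral_sub hIA (hIB.add hIC), ← hfund]
  congr 1
  ext t
  ring

/-- Proposition 1: the EPV of the premium reduction splits into the lapse-released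
policy-value difference and the expected cash surplus on lapse. -/
theorem stmt_0 (n M : ℝ) (hn : 0 < n)
    (δ μ ν ν' P Pstar S C V Vstar φ : ℝ → ℝ)
    (hδ : ContinuousOn δ (Icc 0 n)) (hμ : ContinuousOn μ (Icc 0 n))
    (hν : ContinuousOn ν (Icc 0 n)) (hν' : ContinuousOn ν' (Icc 0 n))
    (hP : ContinuousOn P (Icc 0 n)) (hPstar : ContinuousOn Pstar (Icc 0 n))
    (hS : ContinuousOn S (Icc 0 n)) (hC : ContinuousOn C (Icc 0 n))
    (hV : ∀ t ∈ Icc (0:ℝ) n,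
      HasDerivAt V (δ t * V t + P t - μ t * (S t - V t)) t)
    (hV0 : V 0 = 0) (hVn : V n = M)
    (hVstar : ∀ t ∈ Icc (0:ℝ) n,
      HasDerivAt Vstar
        (δ t * Vstar t + Pstar t - μ t * (S t - Vstar t) - ν t * (C t - Vstar t)) t)
    (hVstar0 : Vstar 0 = 0) (hVstarn : Vstar n = M)
    (hφ : ∀ t, φ t = Real.exp (-∫ r in (0:ℝ)..t, (δ r + μ r + ν' r))) :
    ∫ t in (0:ℝ)..n, φ t * (P t - Pstar t)
      = (∫ t in (0:ℝ)..n, φ t * ν' t * (V t - Vstar t))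
        + ∫ t in (0:ℝ)..n, φ t * ν t * (Vstar t - C t) :=
  stmt_0_general n M hn δ μ ν ν' P Pstar S C V Vstar φ hδ hμ hν hν' hP hPstar hC hV hV0 hVn hVstar
    hVstar0 hVstarn hφ
end

section
/- Under the assumptions of the previous setting, if moreover the experienced lapse rate equals the premium-basis lapse rate, ν'(t) = ν(t) for all t ∈ [0,n], then the expected present value of the premium reduction equals the expected present value of the net cashflow on lapse: ∫₀ⁿ φ(t)·(P(t) − P*(t)) dt = ∫₀ⁿ φ(t)·ν(t)·(V(t) − C(t)) dt. -/
/-! Discounting by `φ = exp (-∫ (δ + μ + ν))` turns the equation satisfied by `W = V - Vstar`,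
`W' = (δ + μ + ν) W + (P - Pstar) - ν (V - C)`, into `(φ W)' = φ ((P - Pstar) - ν (V - C))`.
Since `W` vanishes at both ends of the policy term, the integral of the right-hand side is zero. -/

open Set intervalIntegral MeasureTheory

section Discounting

variable {f : ℝ → ℝ} {a b : ℝ}

theorem continuousOn_exp_neg_integral (hab : a ≤ b) (hf : ContinuousOn f (Icc a b)) :
    ContinuousOn (fun u => Real.exp (-∫ r in a..u, f r)) (Icc a b) := by
  have hprim := continuousOn_primitive_interval (μ := volume) (f := f) (a := a) (b := b)
    (by rw [uIcc_of_le hab]; exact hf.integrableOn_Icc)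
  rw [uIcc_of_le hab] at hprim
  exact Real.continuous_exp.comp_continuousOn hprim.neg

theorem hasDerivAt_exp_neg_integral (hf : ContinuousOn f (Icc a b)) {t : ℝ} (ht : t ∈ Ioo a b) :
    HasDerivAt (fun u => Real.exp (-∫ r in a..u, f r))
      (-f t * Real.exp (-∫ r in a..t, f r)) t := by
  have hint : IntervalIntegrable f volume a t :=
    (hf.mono (Icc_subset_Icc_right ht.2.le)).intervalIntegrable_of_Icc ht.1.le
  have hmeas : StronglyMeasurableAtFilter f (nhds t) :=
    (hf.mono Ioo_subset_Icc_self).stronglyMeasurableAtFilter isOpen_Ioo t ht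
  have hcont : ContinuousAt f t := hf.continuousAt (Icc_mem_nhds ht.1 ht.2)
  rw [mul_comm]
  exact (integral_hasDerivAt_right hint hmeas hcont).neg.exp

theorem integral_mul_eq_sub_of_hasDerivAt (hab : a ≤ b) {κ φ W h : ℝ → ℝ}
    (hφ : ContinuousOn φ (Icc a b)) (hW : ContinuousOn W (Icc a b))
    (hh : ContinuousOn h (Icc a b))
    (hφ' : ∀ t ∈ Ioo a b, HasDerivAt φ (-κ t * φ t) t)
    (hW' : ∀ t ∈ Ioo a b, HasDerivAt W (κ t * W t + h t) t) :
    ∫ t in a..b, φ t * h t = φ b * W b - φ a * W a := by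
  refine integral_eq_sub_of_hasDerivAt_of_le hab (hφ.mul hW) (fun t ht => ?_)
    ((hφ.mul hh).intervalIntegrable_of_Icc hab)
  exact ((hφ' t ht).mul (hW' t ht)).congr_deriv (by ring)

end Discounting

theorem stmt_1_general (n M : ℝ) (hn : 0 < n)
    (δ μ ν P Pstar S C V Vstar φ : ℝ → ℝ)
    (hδ : ContinuousOn δ (Icc 0 n)) (hμ : ContinuousOn μ (Icc 0 n))
    (hν : ContinuousOn ν (Icc 0 n))
    (hP : ContinuousOn P (Icc 0 n)) (hPstar : ContinuousOn Pstar (Icc 0 n))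
    (hC : ContinuousOn C (Icc 0 n))
    (hV : ∀ t ∈ Icc (0:ℝ) n,
      HasDerivAt V (δ t * V t + P t - μ t * (S t - V t)) t)
    (hV0 : V 0 = 0) (hVn : V n = M)
    (hVstar : ∀ t ∈ Icc (0:ℝ) n,
      HasDerivAt Vstar
        (δ t * Vstar t + Pstar t - μ t * (S t - Vstar t) - ν t * (C t - Vstar t)) t)
    (hVstar0 : Vstar 0 = 0) (hVstarn : Vstar n = M)
    (hφ : ∀ t, φ t = Real.exp (-∫ r in (0:ℝ)..t, (δ r + μ r + ν r))) :
    ∫ t in (0:ℝ)..n, φ t * (P t - Pstar t)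
      = ∫ t in (0:ℝ)..n, φ t * ν t * (V t - C t) := by
  have hκ : ContinuousOn (fun t => δ t + μ t + ν t) (Icc 0 n) := (hδ.add hμ).add hν
  have hφeq : φ = fun t => Real.exp (-∫ r in (0:ℝ)..t, (δ r + μ r + ν r)) := funext hφ
  have hφc : ContinuousOn φ (Icc 0 n) := hφeq ▸ continuousOn_exp_neg_integral hn.le hκ
  have hφ' : ∀ t ∈ Ioo 0 n, HasDerivAt φ (-(δ t + μ t + ν t) * φ t) t := fun t ht => by
    rw [hφeq]
    exact hasDerivAt_exp_neg_integral hκ ht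
  have hVc : ContinuousOn V (Icc 0 n) := fun t ht => (hV t ht).continuousAt.continuousWithinAt
  have hVstarc : ContinuousOn Vstar (Icc 0 n) :=
    fun t ht => (hVstar t ht).continuousAt.continuousWithinAt
  have hgap := integral_mul_eq_sub_of_hasDerivAt (W := fun t => V t - Vstar t)
    (h := fun t => P t - Pstar t - ν t * (V t - C t)) hn.le hφc (hVc.sub hVstarc)
    ((hP.sub hPstar).sub (hν.mul (hVc.sub hC))) hφ'
    (fun t ht => ((hV t (Ioo_subset_Icc_self ht)).sub
      (hVstar t (Ioo_subset_Icc_self ht))).congr_deriv (by ring))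
  simp only [hV0, hVn, hVstar0, hVstarn, sub_self, mul_zero] at hgap
  have hA : IntervalIntegrable (fun t => φ t * (P t - Pstar t)) volume 0 n :=
    (hφc.mul (hP.sub hPstar)).intervalIntegrable_of_Icc hn.le
  have hB : IntervalIntegrable (fun t => φ t * ν t * (V t - C t)) volume 0 n :=
    ((hφc.mul hν).mul (hVc.sub hC)).intervalIntegrable_of_Icc hn.le
  rw [← sub_eq_zero, ← integral_sub hA hB, ← hgap]
  congr 1 with t
  ring

/-- Corollary 1: when experienced lapses equal the premium-basis lapses, the EPV of
the premium reduction equals the EPV of the net cashflow on lapse. -/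
theorem stmt_1 (n M : ℝ) (hn : 0 < n)
    (δ μ ν P Pstar S C V Vstar φ : ℝ → ℝ)
    (hδ : ContinuousOn δ (Icc 0 n)) (hμ : ContinuousOn μ (Icc 0 n))
    (hν : ContinuousOn ν (Icc 0 n))
    (hP : ContinuousOn P (Icc 0 n)) (hPstar : ContinuousOn Pstar (Icc 0 n))
    (hS : ContinuousOn S (Icc 0 n)) (hC : ContinuousOn C (Icc 0 n))
    (hV : ∀ t ∈ Icc (0:ℝ) n,
      HasDerivAt V (δ t * V t + P t - μ t * (S t - V t)) t)
    (hV0 : V 0 = 0) (hVn : V n = M)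
    (hVstar : ∀ t ∈ Icc (0:ℝ) n,
      HasDerivAt Vstar
        (δ t * Vstar t + Pstar t - μ t * (S t - Vstar t) - ν t * (C t - Vstar t)) t)
    (hVstar0 : Vstar 0 = 0) (hVstarn : Vstar n = M)
    (hφ : ∀ t, φ t = Real.exp (-∫ r in (0:ℝ)..t, (δ r + μ r + ν r))) :
    ∫ t in (0:ℝ)..n, φ t * (P t - Pstar t)
      = ∫ t in (0:ℝ)..n, φ t * ν t * (V t - C t) :=
  stmt_1_general n M hn δ μ ν P Pstar S C V Vstar φ hδ hμ hν hP hPstar hC hV hV0 hVn hVstar hVstar0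
    hVstarn hφ
end
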